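/- Dimension upper bound: for any bipartite state ρ^{AB} and ε ∈ [0,1], H_H^ε(AB)_ρ ≤ H_H^ε(A)_ρ + log|B|. -/

import Mathlib

open Matrix Kronecker ComplexOrder

noncomputable section

def IsState {n : Type*} [Fintype n] (ρ : Matrix n n ℂ) : Prop :=
  ρ.PosSemidef ∧ ρ.trace = 1

/-- `2^{H_H^ε(ρ)}`: the optimal value of the hypothesis testing minimization
`min { Tr Π : 0 ≤ Π ≤ I, Tr[Πρ] ≥ 1-ε }`. -/
def hypoVal {n : Type*} [Fintype n] [DecidableEq n] (ρ : Matrix n n ℂ) (ε : ℝ) : ℝ :=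
  sInf {t : ℝ | ∃ P : Matrix n n ℂ, P.PosSemidef ∧ ((1 : Matrix n n ℂ) - P).PosSemidef ∧
    1 - ε ≤ ((P * ρ).trace).re ∧ t = (P.trace).re}

/-- The smooth hypothesis testing entropy `H_H^ε(ρ) = log₂` of the optimal value. -/
def HH {n : Type*} [Fintype n] [DecidableEq n] (ρ : Matrix n n ℂ) (ε : ℝ) : ℝ :=
  Real.logb 2 (hypoVal ρ ε)

/-- Outer product `|ψ⟩⟨ψ|`. -/
def outer {n : Type*} (ψ : n → ℂ) : Matrix n n ℂ := Matrix.vecMulVec ψ (star ψ)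

/-- Partial trace over the first tensor factor. -/
def ptL {α β : Type*} [Fintype α] (M : Matrix (α × β) (α × β) ℂ) : Matrix β β ℂ :=
  Matrix.of fun b1 b2 => ∑ a, M (a, b1) (a, b2)

/-- Partial trace over the second tensor factor. -/
def ptR {α β : Type*} [Fintype β] (M : Matrix (α × β) (α × β) ℂ) : Matrix α α ℂ :=
  Matrix.of fun a1 a2 => ∑ b, M (a1, b) (a2, b)

/-- The trace norm `‖M‖₁ = Tr √(Mᴴ M)`. -/
def traceNorm {n : Type*} [Fintype n] [DecidableEq n] (M : Matrix n n ℂ) : ℝ :=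
  (((Matrix.posSemidef_conjTranspose_mul_self M).1.eigenvectorUnitary.1 *
    Matrix.diagonal (((↑) : ℝ → ℂ) ∘ (Real.sqrt ∘ (Matrix.posSemidef_conjTranspose_mul_self M).1.eigenvalues)) *
    (star (Matrix.posSemidef_conjTranspose_mul_self M).1.eigenvectorUnitary : Matrix n n ℂ)).trace).re

end

section Aux

open scoped MatrixOrder

variable {n : Type*} [Fintype n] [DecidableEq n]

private lemma psd_diag_re_nonneg {P : Matrix n n ℂ} (hP : P.PosSemidef) (i : n) :
    0 ≤ (P i i).re := by
  have h := hP.dotProduct_mulVec_nonneg (Pi.single i 1)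
  have hs : star (Pi.single i 1 : n → ℂ) = Pi.single i 1 := by
    ext j; by_cases hj : j = i <;> simp [Pi.single_apply, hj]
  rw [hs, single_dotProduct, one_mul, Matrix.mulVec_single] at h
  simpa using (Complex.le_def.mp h).1

private lemma trace_re_nonneg {P : Matrix n n ℂ} (hP : P.PosSemidef) : 0 ≤ (P.trace).re := by
  have : (P.trace).re = ∑ i, (P i i).re := by
    simp [Matrix.trace, Matrix.diag, Complex.re_sum]
  rw [this]
  exact Finset.sum_nonneg fun i _ => psd_diag_re_nonneg hP i

private lemma trace_mul_conjTranspose_re (M : Matrix n n ℂ) :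
    ((M * Mᴴ).trace).re = ∑ i, ∑ j, Complex.normSq (M i j) := by
  simp [Matrix.trace, Matrix.diag, Matrix.mul_apply, Matrix.conjTranspose_apply,
    Complex.mul_conj, Complex.re_sum]

private lemma trace_mul_re_le {Q R : Matrix n n ℂ} (hQ : Q.PosSemidef) (hR : R.PosSemidef) :
    (((Q * R).trace)).re ≤ (Q.trace).re * (R.trace).re := by
  set S := CFC.sqrt Q with hS
  set T := CFC.sqrt R with hT
  have hSh : Sᴴ = S := (CFC.sqrt_nonneg Q).posSemidef.1
  have hTh : Tᴴ = T := (CFC.sqrt_nonneg R).posSemidef.1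
  have h1 : (Q * R).trace = ((S * T) * (S * T)ᴴ).trace := by
    rw [Matrix.conjTranspose_mul, hSh, hTh]
    rw [← CFC.sqrt_mul_sqrt_self Q hQ.nonneg, ← CFC.sqrt_mul_sqrt_self R hR.nonneg, ← hS, ← hT]
    rw [show S * S * (T * T) = S * (S * (T * T)) from by rw [mul_assoc]]
    rw [Matrix.trace_mul_comm]
    congr 1
    simp [mul_assoc]
  have hQtr : (Q.trace).re = ∑ i, ∑ j, Complex.normSq (S i j) := by
    rw [← CFC.sqrt_mul_sqrt_self Q hQ.nonneg, ← hS]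
    conv_lhs => rw [show S * S = S * Sᴴ from by rw [hSh]]
    exact trace_mul_conjTranspose_re S
  have hRtr : (R.trace).re = ∑ i, ∑ j, Complex.normSq (T i j) := by
    rw [← CFC.sqrt_mul_sqrt_self R hR.nonneg, ← hT]
    conv_lhs => rw [show T * T = T * Tᴴ from by rw [hTh]]
    exact trace_mul_conjTranspose_re T
  rw [h1, trace_mul_conjTranspose_re, hQtr, hRtr]
  have hij : ∀ i j, Complex.normSq ((S * T) i j) ≤
      (∑ k, Complex.normSq (S i k)) * (∑ k, Complex.normSq (T k j)) := by
    intro i j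
    rw [Matrix.mul_apply]
    calc Complex.normSq (∑ k, S i k * T k j)
        = ‖∑ k, S i k * T k j‖ ^ 2 := (Complex.sq_norm _).symm
      _ ≤ (∑ k, ‖S i k‖ * ‖T k j‖) ^ 2 := by
          apply pow_le_pow_left₀ (norm_nonneg _)
          calc ‖∑ k, S i k * T k j‖ ≤ ∑ k, ‖S i k * T k j‖ :=
                norm_sum_le _ _
            _ = ∑ k, ‖S i k‖ * ‖T k j‖ := by
                  simp [norm_mul]
      _ ≤ (∑ k, ‖S i k‖ ^ 2) * (∑ k, ‖T k j‖ ^ 2) :=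
          Finset.sum_mul_sq_le_sq_mul_sq _ _ _
      _ = (∑ k, Complex.normSq (S i k)) * (∑ k, Complex.normSq (T k j)) := by
          simp [Complex.sq_norm]
  calc ∑ i, ∑ j, Complex.normSq ((S * T) i j)
      ≤ ∑ i, ∑ j, (∑ k, Complex.normSq (S i k)) * (∑ k, Complex.normSq (T k j)) := by
        apply Finset.sum_le_sum; intro i _; exact Finset.sum_le_sum fun j _ => hij i j
    _ = (∑ i, ∑ k, Complex.normSq (S i k)) * (∑ j, ∑ k, Complex.normSq (T k j)) := by
        rw [Finset.sum_mul_sum]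
    _ = (∑ i, ∑ j, Complex.normSq (S i j)) * (∑ i, ∑ j, Complex.normSq (T i j)) := by
        rw [Finset.sum_comm (f := fun j k => Complex.normSq (T k j))]

variable {A B : Type*} [Fintype A] [DecidableEq A] [Fintype B] [DecidableEq B]

private lemma conjTranspose_kron_one (C : Matrix A A ℂ) :
    (C ⊗ₖ (1 : Matrix B B ℂ))ᴴ = Cᴴ ⊗ₖ (1 : Matrix B B ℂ) := by
  ext ⟨a, b⟩ ⟨a', b'⟩
  by_cases h : b = b' <;>
    simp [Matrix.conjTranspose_apply, Matrix.kroneckerMap_apply, Matrix.one_apply, h, eq_comm]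

private lemma kron_one_psd {P : Matrix A A ℂ} (hP : P.PosSemidef) :
    (P ⊗ₖ (1 : Matrix B B ℂ)).PosSemidef := by
  obtain ⟨C, hC⟩ : ∃ C : Matrix A A ℂ, P = Cᴴ * C := CStarAlgebra.nonneg_iff_eq_star_mul_self.mp hP.nonneg
  have : P ⊗ₖ (1 : Matrix B B ℂ) = (C ⊗ₖ (1 : Matrix B B ℂ))ᴴ * (C ⊗ₖ (1 : Matrix B B ℂ)) := by
    rw [conjTranspose_kron_one, ← Matrix.mul_kronecker_mul, ← hC, one_mul]
  rw [this]
  exact Matrix.posSemidef_conjTranspose_mul_self _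

private lemma one_sub_kron_one (P : Matrix A A ℂ) :
    (1 : Matrix (A × B) (A × B) ℂ) - P ⊗ₖ (1 : Matrix B B ℂ)
      = ((1 : Matrix A A ℂ) - P) ⊗ₖ (1 : Matrix B B ℂ) := by
  ext ⟨a, b⟩ ⟨a', b'⟩
  by_cases h : b = b' <;> by_cases h2 : a = a' <;>
    simp [Matrix.sub_apply, Matrix.kroneckerMap_apply, Matrix.one_apply, Prod.ext_iff, ite_and,
      sub_mul, h, h2]

private lemma trace_kron_one_mul (P : Matrix A A ℂ) (ρ : Matrix (A × B) (A × B) ℂ) :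
    ((P ⊗ₖ (1 : Matrix B B ℂ)) * ρ).trace = (P * ptR ρ).trace := by
  simp only [Matrix.trace, Matrix.diag, Matrix.mul_apply, ptR, Matrix.of_apply,
    Matrix.kroneckerMap_apply, Matrix.one_apply, Fintype.sum_prod_type, mul_ite, mul_one, mul_zero,
    ite_mul, zero_mul, Finset.sum_ite_eq, Finset.mem_univ, if_true, Finset.mul_sum]
  apply Finset.sum_congr rfl; intro a _
  rw [Finset.sum_comm]

private lemma trace_kron_one (P : Matrix A A ℂ) [Nonempty B] :
    ((P ⊗ₖ (1 : Matrix B B ℂ)).trace).re = (P.trace).re * Fintype.card B := by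
  rw [Matrix.trace_kronecker, Matrix.trace_one]
  simp [Complex.mul_re]

private lemma ptR_isState {ρ : Matrix (A × B) (A × B) ℂ} (hρ : IsState ρ) : IsState (ptR ρ) := by
  obtain ⟨hpsd, htr⟩ := hρ
  refine ⟨Matrix.PosSemidef.of_dotProduct_mulVec_nonneg ?_ ?_, ?_⟩
  · ext a1 a2
    simp only [Matrix.conjTranspose_apply, ptR, Matrix.of_apply, star_sum]
    exact Finset.sum_congr rfl fun b _ => hpsd.1.apply _ _
  · intro x
    have key : star x ⬝ᵥ (ptR ρ *ᵥ x)
        = ∑ b : B, star (fun p : A × B => if p.2 = b then x p.1 else 0) ⬝ᵥ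
            (ρ *ᵥ fun p : A × B => if p.2 = b then x p.1 else 0) := by
      simp only [dotProduct, Matrix.mulVec, ptR, Matrix.of_apply, Pi.star_apply,
        Fintype.sum_prod_type, mul_ite, mul_zero, ite_mul, zero_mul,
        apply_ite (star : ℂ → ℂ), star_zero,
        Finset.sum_ite_irrel, Finset.sum_const_zero, Finset.sum_ite_eq', Finset.mem_univ, if_true, Finset.mul_sum,
        Finset.sum_mul]
      exact Eq.trans (Finset.sum_congr rfl fun a1 _ => Finset.sum_comm) Finset.sum_comm
    rw [key]
    exact Finset.sum_nonneg fun b _ => hpsd.dotProduct_mulVec_nonneg _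
  · rw [← htr]
    simp [Matrix.trace, Matrix.diag, ptR, Fintype.sum_prod_type]

end Aux

/-- dimension bound `H_H^ε(AB) ≤ H_H^ε(A) + log|B|`. -/
theorem stmt6 {A B : Type*} [Fintype A] [DecidableEq A] [Fintype B] [DecidableEq B] [Nonempty B]
    (ρ : Matrix (A × B) (A × B) ℂ) (hρ : IsState ρ)
    (ε : ℝ) (hε0 : 0 ≤ ε) (hε1 : ε ≤ 1) :
    HH ρ ε ≤ HH (ptR ρ) ε + Real.logb 2 (Fintype.card B) := by
  have hA : IsState (ptR ρ) := ptR_isState hρ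
  set SAB : Set ℝ := {t : ℝ | ∃ P : Matrix (A × B) (A × B) ℂ, P.PosSemidef ∧
    ((1 : Matrix (A × B) (A × B) ℂ) - P).PosSemidef ∧
    1 - ε ≤ ((P * ρ).trace).re ∧ t = (P.trace).re} with hSAB
  set SA : Set ℝ := {t : ℝ | ∃ P : Matrix A A ℂ, P.PosSemidef ∧
    ((1 : Matrix A A ℂ) - P).PosSemidef ∧
    1 - ε ≤ ((P * ptR ρ).trace).re ∧ t = (P.trace).re} with hSA
  have huAB : hypoVal ρ ε = sInf SAB := rfl
  have huA : hypoVal (ptR ρ) ε = sInf SA := rfl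
  -- generic facts
  have hbddAB : BddBelow SAB := ⟨0, by rintro t ⟨P, hP, -, -, rfl⟩; exact trace_re_nonneg hP⟩
  have hbddA : BddBelow SA := ⟨0, by rintro t ⟨P, hP, -, -, rfl⟩; exact trace_re_nonneg hP⟩
  have hneA : SA.Nonempty := by
    refine ⟨((1 : Matrix A A ℂ).trace).re, 1, Matrix.PosSemidef.one, by simpa using
      Matrix.PosSemidef.zero, ?_, rfl⟩
    rw [one_mul, hA.2]
    simpa using hε0
  have hlbAB : ∀ t ∈ SAB, 1 - ε ≤ t := by
    rintro t ⟨P, hP, -, h1, rfl⟩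
    refine h1.trans ?_
    calc ((P * ρ).trace).re ≤ (P.trace).re * (ρ.trace).re := trace_mul_re_le hP hρ.1
      _ = (P.trace).re := by rw [hρ.2]; simp
  have hlbA : ∀ t ∈ SA, 1 - ε ≤ t := by
    rintro t ⟨P, hP, -, h1, rfl⟩
    refine h1.trans ?_
    calc ((P * ptR ρ).trace).re ≤ (P.trace).re * ((ptR ρ).trace).re := trace_mul_re_le hP hA.1
      _ = (P.trace).re := by rw [hA.2]; simp
  have hd0 : (0 : ℝ) < (Fintype.card B : ℝ) := by exact_mod_cast Fintype.card_pos
  have hd1 : (1 : ℝ) ≤ (Fintype.card B : ℝ) := by exact_mod_cast Fintype.card_pos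
  -- main bound on hypoVal
  have key : hypoVal ρ ε ≤ hypoVal (ptR ρ) ε * Fintype.card B := by
    rw [huA, huAB, ← div_le_iff₀ hd0]
    refine le_csInf hneA ?_
    rintro t ⟨P, hP, hP1, hfid, rfl⟩
    rw [div_le_iff₀ hd0]
    refine csInf_le hbddAB ?_
    refine ⟨P ⊗ₖ (1 : Matrix B B ℂ), kron_one_psd hP, ?_, ?_, (trace_kron_one P).symm⟩
    · rw [one_sub_kron_one]; exact kron_one_psd hP1
    · rw [trace_kron_one_mul]; exact hfid
  have hneAB : SAB.Nonempty := by
    refine ⟨((1 : Matrix (A × B) (A × B) ℂ).trace).re, 1, Matrix.PosSemidef.one, by simpa using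
      Matrix.PosSemidef.zero, ?_, rfl⟩
    rw [one_mul, hρ.2]
    simpa using hε0
  rcases lt_or_eq_of_le hε1 with hlt | heq
  · have huABpos : 0 < hypoVal ρ ε :=
      lt_of_lt_of_le (by linarith) ((le_csInf hneAB hlbAB).trans_eq huAB.symm)
    have huApos : 0 < hypoVal (ptR ρ) ε :=
      lt_of_lt_of_le (by linarith) ((le_csInf hneA hlbA).trans_eq huA.symm)
    have h2 : HH ρ ε ≤ Real.logb 2 (hypoVal (ptR ρ) ε * Fintype.card B) :=
      Real.logb_le_logb_of_le one_lt_two huABpos key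
    rwa [Real.logb_mul (ne_of_gt huApos) (ne_of_gt hd0)] at h2
  · subst heq
    have hnn : ∀ t ∈ SAB, (0:ℝ) ≤ t := by
      rintro t ⟨P, hP, -, -, rfl⟩; exact trace_re_nonneg hP
    have hnnA : ∀ t ∈ SA, (0:ℝ) ≤ t := by
      rintro t ⟨P, hP, -, -, rfl⟩; exact trace_re_nonneg hP
    have h0AB : hypoVal ρ 1 = 0 := by
      refine le_antisymm ?_ ((le_csInf hneAB hnn).trans_eq huAB.symm)
      rw [huAB]
      refine csInf_le hbddAB ⟨0, Matrix.PosSemidef.zero, by simpa using Matrix.PosSemidef.one,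
        by simp, by simp⟩
    have h0A : hypoVal (ptR ρ) 1 = 0 := by
      refine le_antisymm ?_ ((le_csInf hneA hnnA).trans_eq huA.symm)
      rw [huA]
      refine csInf_le hbddA ⟨0, Matrix.PosSemidef.zero, by simpa using Matrix.PosSemidef.one,
        by simp, by simp⟩
    rw [HH, HH, h0AB, h0A, Real.logb_zero, zero_add]
    exact Real.logb_nonneg one_lt_two hd1
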